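/- Let q : ℝ × ℝ → ℝ be infinitely differentiable and let z ∈ ℂ. Define 2×2 complex matrix-valued functions U(x,t) := −i z σ₃ + q(x,t) σ₁ and V(x,t) := [[−4iz³ − 2iz q(x,t)², 4z² q(x,t) + 2iz ∂_x q(x,t) + 2q(x,t)³ − ∂_x² q(x,t)], [4z² q(x,t) − 2iz ∂_x q(x,t) + 2q(x,t)³ − ∂_x² q(x,t), 4iz³ + 2iz q(x,t)²]]. Then for every (x,t) ∈ ℝ², the zero-curvature equation ∂_t U(x,t) − ∂_x V(x,t) + U(x,t)·V(x,t) − V(x,t)·U(x,t) = 0 holds if and only if ∂_t q(x,t) − 6 q(x,t)² ∂_x q(x,t) + ∂_x³ q(x,t) = 0; i.e. the Lax pair is compatible exactly when q solves the defocusing mKdV equation. -/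

import Mathlib

open Complex

/-- Pauli matrix σ₁. -/
def pauli1 : Matrix (Fin 2) (Fin 2) ℂ := !![0, 1; 1, 0]

/-- Pauli matrix σ₃. -/
def pauli3 : Matrix (Fin 2) (Fin 2) ℂ := !![1, 0; 0, -1]

/-- The spatial Lax matrix `U(x,t) = −izσ₃ + q σ₁`. -/
noncomputable def laxU (q : ℝ × ℝ → ℝ) (z : ℂ) (x t : ℝ) : Matrix (Fin 2) (Fin 2) ℂ :=
  !![-(Complex.I * z), (q (x, t) : ℂ);
     (q (x, t) : ℂ), Complex.I * z]

/-- The temporal Lax matrix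
`V = −4iz³σ₃ + 4z²qσ₁ + 2izσ₃(q_x σ₁ − q² I) + (2q³ − q_xx)σ₁`, written entrywise. -/
noncomputable def laxV (q : ℝ × ℝ → ℝ) (z : ℂ) (x t : ℝ) : Matrix (Fin 2) (Fin 2) ℂ :=
  !![-(4 * Complex.I * z ^ 3) - 2 * Complex.I * z * (q (x, t) : ℂ) ^ 2,
       4 * z ^ 2 * (q (x, t) : ℂ) + 2 * Complex.I * z * (deriv (fun y : ℝ => q (y, t)) x : ℂ)
         + 2 * (q (x, t) : ℂ) ^ 3 - (iteratedDeriv 2 (fun y : ℝ => q (y, t)) x : ℂ);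
     4 * z ^ 2 * (q (x, t) : ℂ) - 2 * Complex.I * z * (deriv (fun y : ℝ => q (y, t)) x : ℂ)
         + 2 * (q (x, t) : ℂ) ^ 3 - (iteratedDeriv 2 (fun y : ℝ => q (y, t)) x : ℂ),
       4 * Complex.I * z ^ 3 + 2 * Complex.I * z * (q (x, t) : ℂ) ^ 2]

/-- The zero-curvature (compatibility) equation `U_t − V_x + UV − VU = 0` of the Lax
pair holds at `(x,t)` if and only if `q` satisfies the defocusing mKdV equation
`q_t − 6 q² q_x + q_xxx = 0` at `(x,t)`. Derivatives of matrices are entrywise. -/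
theorem zero_curvature_iff_mkdv (q : ℝ × ℝ → ℝ) (hq : ContDiff ℝ (⊤ : ℕ∞) q) (z : ℂ) :
    ∀ x t : ℝ,
      (∀ i j : Fin 2,
        deriv (fun s : ℝ => laxU q z x s i j) t
          - deriv (fun y : ℝ => laxV q z y t i j) x
          + (laxU q z x t * laxV q z x t - laxV q z x t * laxU q z x t) i j = 0)
      ↔ deriv (fun s : ℝ => q (x, s)) t
          - 6 * (q (x, t)) ^ 2 * deriv (fun y : ℝ => q (y, t)) x
          + iteratedDeriv 3 (fun y : ℝ => q (y, t)) x = 0 := by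
  intro x t
  have hf : ContDiff ℝ (⊤ : ℕ∞) (fun y : ℝ => q (y, t)) :=
    (hq.comp (contDiff_id.prodMk contDiff_const)).of_le (by simp)
  have hg : ContDiff ℝ (⊤ : ℕ∞) (fun s : ℝ => q (x, s)) :=
    (hq.comp (contDiff_const.prodMk contDiff_id)).of_le (by simp)
  have hdn : ∀ (n : ℕ) (y : ℝ), HasDerivAt (iteratedDeriv n (fun y' : ℝ => q (y', t)))
      ((iteratedDeriv (n+1) (fun y' : ℝ => q (y', t)) y : ℝ)) y := by
    intro n y
    rw [iteratedDeriv_succ]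
    simp only [iteratedDeriv_eq_iterate]
    exact (((hf.iterate_deriv n).differentiable (by simp)) y).hasDerivAt
  have hC0 : ∀ y : ℝ, HasDerivAt (fun y' : ℝ => ((q (y', t) : ℝ) : ℂ))
      ((deriv (fun y' : ℝ => q (y', t)) y : ℝ) : ℂ) y := by
    intro y
    have := hdn 0 y
    simp only [Nat.reduceAdd, iteratedDeriv_zero, iteratedDeriv_one] at this
    exact this.ofReal_comp
  have hC1 : ∀ y : ℝ, HasDerivAt (fun y' : ℝ => ((deriv (fun u : ℝ => q (u, t)) y' : ℝ) : ℂ))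
      ((iteratedDeriv 2 (fun y' : ℝ => q (y', t)) y : ℝ) : ℂ) y := by
    intro y
    have := hdn 1 y
    simp only [Nat.reduceAdd, iteratedDeriv_one] at this
    exact this.ofReal_comp
  have hC2 : ∀ y : ℝ, HasDerivAt (fun y' : ℝ => ((iteratedDeriv 2 (fun u : ℝ => q (u, t)) y' : ℝ) : ℂ))
      ((iteratedDeriv 3 (fun y' : ℝ => q (y', t)) y : ℝ) : ℂ) y := by
    intro y
    have := hdn 2 y
    simp only [Nat.reduceAdd] at this
    exact this.ofReal_comp
  have hGt : HasDerivAt (fun s : ℝ => ((q (x, s) : ℝ) : ℂ))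
      ((deriv (fun s : ℝ => q (x, s)) t : ℝ) : ℂ) t :=
    ((hg.differentiable (by simp)) t).hasDerivAt.ofReal_comp
  -- coercion-commutation for the derivatives appearing inside laxV
  have cd1 : ∀ y : ℝ, deriv (fun y' : ℝ => ((q (y', t) : ℝ) : ℂ)) y
      = ((deriv (fun y' : ℝ => q (y', t)) y : ℝ) : ℂ) := fun y => (hC0 y).deriv
  have cd2 : ∀ y : ℝ, iteratedDeriv 2 (fun y' : ℝ => ((q (y', t) : ℝ) : ℂ)) y
      = ((iteratedDeriv 2 (fun y' : ℝ => q (y', t)) y : ℝ) : ℂ) := by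
    intro y
    have h1 : deriv (fun y' : ℝ => ((q (y', t) : ℝ) : ℂ))
        = fun y' : ℝ => ((deriv (fun u : ℝ => q (u, t)) y' : ℝ) : ℂ) := funext cd1
    rw [show (2 : ℕ) = 1 + 1 from rfl, iteratedDeriv_succ, iteratedDeriv_one, h1]
    exact (hC1 y).deriv
  -- deriv of U entries in t
  have eU00 : deriv (fun s : ℝ => laxU q z x s 0 0) t = 0 := by
    simp [laxU]
  have eU01 : deriv (fun s : ℝ => laxU q z x s 0 1) t
      = ((deriv (fun s : ℝ => q (x, s)) t : ℝ) : ℂ) := by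
    have h : (fun s : ℝ => laxU q z x s 0 1) = fun s : ℝ => ((q (x, s) : ℝ) : ℂ) := by
      funext s
      simp only [laxU, Matrix.of_apply, Matrix.cons_val', Matrix.cons_val_zero,
        Matrix.cons_val_one, Matrix.head_cons, Matrix.empty_val', Matrix.cons_val_fin_one,
        Matrix.head_fin_const]
    rw [h]; exact hGt.deriv
  have eU10 : deriv (fun s : ℝ => laxU q z x s 1 0) t
      = ((deriv (fun s : ℝ => q (x, s)) t : ℝ) : ℂ) := by
    have h : (fun s : ℝ => laxU q z x s 1 0) = fun s : ℝ => ((q (x, s) : ℝ) : ℂ) := by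
      funext s
      simp only [laxU, Matrix.of_apply, Matrix.cons_val', Matrix.cons_val_zero,
        Matrix.cons_val_one, Matrix.head_cons, Matrix.empty_val', Matrix.cons_val_fin_one,
        Matrix.head_fin_const]
    rw [h]; exact hGt.deriv
  have eU11 : deriv (fun s : ℝ => laxU q z x s 1 1) t = 0 := by
    simp [laxU]
  -- deriv of V entries in x
  have eV00 : deriv (fun y : ℝ => laxV q z y t 0 0) x
      = -(4 * Complex.I * z * ((q (x, t) : ℝ) : ℂ) * ((deriv (fun y : ℝ => q (y, t)) x : ℝ) : ℂ)) := by
    have h : (fun y : ℝ => laxV q z y t 0 0)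
        = fun y : ℝ => -(4 * Complex.I * z ^ 3)
            - 2 * Complex.I * z * (((q (y, t) : ℝ) : ℂ) * ((q (y, t) : ℝ) : ℂ)) := by
      funext y
      simp only [laxV, Matrix.of_apply, Matrix.cons_val', Matrix.cons_val_zero,
        Matrix.cons_val_one, Matrix.head_cons, Matrix.empty_val', Matrix.cons_val_fin_one,
        Matrix.head_fin_const]
      ring
    rw [h]
    exact ((((hC0 x).mul (hC0 x)).const_mul (2 * Complex.I * z)).const_sub
      (-(4 * Complex.I * z ^ 3))).deriv.trans (by ring)
  have eV01 : deriv (fun y : ℝ => laxV q z y t 0 1) x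
      = 4 * z ^ 2 * ((deriv (fun y : ℝ => q (y, t)) x : ℝ) : ℂ)
        + 2 * Complex.I * z * ((iteratedDeriv 2 (fun y : ℝ => q (y, t)) x : ℝ) : ℂ)
        + 6 * ((q (x, t) : ℝ) : ℂ) ^ 2 * ((deriv (fun y : ℝ => q (y, t)) x : ℝ) : ℂ)
        - ((iteratedDeriv 3 (fun y : ℝ => q (y, t)) x : ℝ) : ℂ) := by
    have h : (fun y : ℝ => laxV q z y t 0 1)
        = fun y : ℝ => 4 * z ^ 2 * ((q (y, t) : ℝ) : ℂ)
            + 2 * Complex.I * z * ((deriv (fun u : ℝ => q (u, t)) y : ℝ) : ℂ)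
            + 2 * (((q (y, t) : ℝ) : ℂ) * ((q (y, t) : ℝ) : ℂ) * ((q (y, t) : ℝ) : ℂ))
            - ((iteratedDeriv 2 (fun u : ℝ => q (u, t)) y : ℝ) : ℂ) := by
      funext y
      simp only [laxV, Matrix.of_apply, Matrix.cons_val', Matrix.cons_val_zero,
        Matrix.cons_val_one, Matrix.head_cons, Matrix.empty_val', Matrix.cons_val_fin_one,
        Matrix.head_fin_const, cd1, cd2]
      ring
    rw [h]
    exact (((((hC0 x).const_mul (4 * z ^ 2)).add ((hC1 x).const_mul (2 * Complex.I * z))).add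
      ((((hC0 x).mul (hC0 x)).mul (hC0 x)).const_mul 2)).sub (hC2 x)).deriv.trans (by simp only [Pi.mul_apply]; ring)
  have eV10 : deriv (fun y : ℝ => laxV q z y t 1 0) x
      = 4 * z ^ 2 * ((deriv (fun y : ℝ => q (y, t)) x : ℝ) : ℂ)
        - 2 * Complex.I * z * ((iteratedDeriv 2 (fun y : ℝ => q (y, t)) x : ℝ) : ℂ)
        + 6 * ((q (x, t) : ℝ) : ℂ) ^ 2 * ((deriv (fun y : ℝ => q (y, t)) x : ℝ) : ℂ)
        - ((iteratedDeriv 3 (fun y : ℝ => q (y, t)) x : ℝ) : ℂ) := by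
    have h : (fun y : ℝ => laxV q z y t 1 0)
        = fun y : ℝ => 4 * z ^ 2 * ((q (y, t) : ℝ) : ℂ)
            - 2 * Complex.I * z * ((deriv (fun u : ℝ => q (u, t)) y : ℝ) : ℂ)
            + 2 * (((q (y, t) : ℝ) : ℂ) * ((q (y, t) : ℝ) : ℂ) * ((q (y, t) : ℝ) : ℂ))
            - ((iteratedDeriv 2 (fun u : ℝ => q (u, t)) y : ℝ) : ℂ) := by
      funext y
      simp only [laxV, Matrix.of_apply, Matrix.cons_val', Matrix.cons_val_zero,
        Matrix.cons_val_one, Matrix.head_cons, Matrix.empty_val', Matrix.cons_val_fin_one,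
        Matrix.head_fin_const, cd1, cd2]
      ring
    rw [h]
    exact (((((hC0 x).const_mul (4 * z ^ 2)).sub ((hC1 x).const_mul (2 * Complex.I * z))).add
      ((((hC0 x).mul (hC0 x)).mul (hC0 x)).const_mul 2)).sub (hC2 x)).deriv.trans (by simp only [Pi.mul_apply]; ring)
  have eV11 : deriv (fun y : ℝ => laxV q z y t 1 1) x
      = 4 * Complex.I * z * ((q (x, t) : ℝ) : ℂ) * ((deriv (fun y : ℝ => q (y, t)) x : ℝ) : ℂ) := by
    have h : (fun y : ℝ => laxV q z y t 1 1)
        = fun y : ℝ => 4 * Complex.I * z ^ 3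
            + 2 * Complex.I * z * (((q (y, t) : ℝ) : ℂ) * ((q (y, t) : ℝ) : ℂ)) := by
      funext y
      simp only [laxV, Matrix.of_apply, Matrix.cons_val', Matrix.cons_val_zero,
        Matrix.cons_val_one, Matrix.head_cons, Matrix.empty_val', Matrix.cons_val_fin_one,
        Matrix.head_fin_const]
      ring
    rw [h]
    exact ((((hC0 x).mul (hC0 x)).const_mul (2 * Complex.I * z)).const_add
      (4 * Complex.I * z ^ 3)).deriv.trans (by ring)
  -- commutator entries
  have hcomm : ∀ i j : Fin 2, (laxU q z x t * laxV q z x t - laxV q z x t * laxU q z x t) i j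
      = !![(-(4 * Complex.I * z * ((q (x, t) : ℝ) : ℂ) * ((deriv (fun y : ℝ => q (y, t)) x : ℝ) : ℂ))),
            (4 * z ^ 2 * ((deriv (fun y : ℝ => q (y, t)) x : ℝ) : ℂ)
              + 2 * Complex.I * z * ((iteratedDeriv 2 (fun y : ℝ => q (y, t)) x : ℝ) : ℂ));
            (4 * z ^ 2 * ((deriv (fun y : ℝ => q (y, t)) x : ℝ) : ℂ)
              - 2 * Complex.I * z * ((iteratedDeriv 2 (fun y : ℝ => q (y, t)) x : ℝ) : ℂ)),
            (4 * Complex.I * z * ((q (x, t) : ℝ) : ℂ) * ((deriv (fun y : ℝ => q (y, t)) x : ℝ) : ℂ))] i j := by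
    simp only [Fin.forall_fin_two]
    refine ⟨⟨?_, ?_⟩, ?_, ?_⟩ <;>
        simp only [laxU, laxV, Matrix.sub_apply, Matrix.mul_apply, Fin.sum_univ_two,
          Matrix.of_apply, Matrix.cons_val', Matrix.cons_val_zero, Matrix.cons_val_one,
          Matrix.head_cons, Matrix.empty_val', Matrix.cons_val_fin_one, Matrix.head_fin_const,
          Fin.isValue, cd1, cd2]
    · ring
    · linear_combination (-4 * z ^ 2 * ((deriv (fun y : ℝ => q (y, t)) x : ℝ) : ℂ)) * Complex.I_sq
    · linear_combination (-4 * z ^ 2 * ((deriv (fun y : ℝ => q (y, t)) x : ℝ) : ℂ)) * Complex.I_sq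
    · ring
  constructor
  · intro h
    have h01 := h 0 1
    rw [eU01, eV01, hcomm 0 1] at h01
    simp only [Matrix.of_apply, Matrix.cons_val', Matrix.cons_val_zero, Matrix.cons_val_one,
      Matrix.head_cons, Matrix.empty_val', Matrix.cons_val_fin_one, Matrix.head_fin_const] at h01
    have key : ((deriv (fun s : ℝ => q (x, s)) t
        - 6 * (q (x, t)) ^ 2 * deriv (fun y : ℝ => q (y, t)) x
        + iteratedDeriv 3 (fun y : ℝ => q (y, t)) x : ℝ) : ℂ) = 0 := by
      push_cast
      linear_combination h01
    exact_mod_cast key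
  · intro h
    have hC : ((deriv (fun s : ℝ => q (x, s)) t : ℝ) : ℂ)
        - 6 * ((q (x, t) : ℝ) : ℂ) ^ 2 * ((deriv (fun y : ℝ => q (y, t)) x : ℝ) : ℂ)
        + ((iteratedDeriv 3 (fun y : ℝ => q (y, t)) x : ℝ) : ℂ) = 0 := by
      have h2 := congrArg (fun r : ℝ => (r : ℂ)) h
      push_cast at h2
      linear_combination h2
    simp only [Fin.forall_fin_two]
    refine ⟨⟨?_, ?_⟩, ?_, ?_⟩ <;>
        rw [hcomm] <;>
        simp only [Matrix.of_apply, Matrix.cons_val', Matrix.cons_val_zero, Matrix.cons_val_one,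
          Matrix.head_cons, Matrix.empty_val', Matrix.cons_val_fin_one, Matrix.head_fin_const,
          Fin.isValue]
    · rw [eU00, eV00]; ring
    · rw [eU01, eV01]; linear_combination hC
    · rw [eU10, eV10]; linear_combination hC
    · rw [eU11, eV11]; ring
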